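/- arXiv:0807.2679 — 3 statements merged into one kernel-verified Lean document; each statement's English description precedes it below -/
import Mathlib

section
/- Let g ≥ 1 be an integer and let 𝐍 = (N_0,…,N_{g−1}) be a vector of positive integers with W = N_0+⋯+N_{g−1} − g. Then the following identity holds in ℤ[t, t^{−1}]: ∏_{k=0}^{g−1} ( ∑_{j=0}^{N_k−1} t^{N_k−1−2j} ) = ∑_{u=⌈W/2⌉}^{W} ( T(𝐍,u) − T(𝐍,u+1) ) · ( ∑_{i=0}^{2u−W} t^{2u−W−2i} ). (This is the paper's expansion of the complete homogeneous specialization h_{𝐍−1}(t,t^{−1}) into two-variable Schur functions s_μ(t,t^{−1}) = (t^{μ_1+1−μ_2} − t^{−(μ_1+1−μ_2)})/(t − t^{−1}), with coefficients given by differences of generalized trinomial coefficients.) -/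
open LaurentPolynomial

/-- The generalized trinomial coefficient `T(𝐍,u)`: the coefficient of `x^u` in
`∏_{k<g} (1 + x + ⋯ + x^{N k - 1})`. -/
noncomputable def trinomialCoeff (g : ℕ) (N : Fin g → ℕ) (u : ℕ) : ℕ :=
  (∏ k : Fin g, ∑ j ∈ Finset.range (N k), (Polynomial.X : Polynomial ℕ) ^ j).coeff u

/-! Substituting `x = t²` and multiplying by `t^{-W}` turns `∏_k (1 + x + ⋯ + x^{N_k - 1})` into
the left-hand side, which is therefore `∑_v T(𝐍,v) t^{2v-W}`. Each factor is palindromic, hence so is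
the product: `T(𝐍,W-v) = T(𝐍,v)`. On the right-hand side the coefficient of `t^{2v-W}` is
`∑_{u ≥ max(v, W-v)} (T(𝐍,u) - T(𝐍,u+1))`, which telescopes to `T(𝐍, max(v, W-v)) = T(𝐍,v)`. -/

open Polynomial Finset

namespace Polynomial

section Semiring

variable {R : Type*} [Semiring R]

theorem coeff_geom_sum_X (n m : ℕ) :
    (∑ i ∈ range n, (X : R[X]) ^ i).coeff m = if m < n then 1 else 0 := by
  simp [coeff_X_pow]

theorem natDegree_geom_sum_X [Nontrivial R] (n : ℕ) :
    (∑ i ∈ range n, (X : R[X]) ^ i).natDegree = n - 1 := by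
  rcases Nat.eq_zero_or_pos n with rfl | hn
  · simp
  refine natDegree_eq_of_le_of_coeff_ne_zero ?_ (by simp [hn])
  exact natDegree_sum_le_of_forall_le _ _ fun i hi => by
    simpa using Nat.le_sub_one_of_lt (mem_range.mp hi)

theorem reverse_geom_sum_X (n : ℕ) :
    (∑ i ∈ range n, (X : R[X]) ^ i).reverse = ∑ i ∈ range n, X ^ i := by
  nontriviality R
  ext m
  rw [coeff_reverse, natDegree_geom_sum_X]
  rcases le_or_gt m (n - 1) with hm | hm
  · rw [revAt_le hm, coeff_geom_sum_X, coeff_geom_sum_X]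
    split_ifs <;> first | rfl | omega
  · rw [revAt_eq_self_of_lt hm]

theorem coeff_natDegree_sub_of_reverse_eq {p : R[X]} (hp : p.reverse = p) {v : ℕ}
    (hv : v ≤ p.natDegree) : p.coeff (p.natDegree - v) = p.coeff v := by
  conv_rhs => rw [← hp]
  rw [coeff_reverse, revAt_le hv]

end Semiring

theorem reverse_prod {R : Type*} [CommSemiring R] [NoZeroDivisors R] {ι : Type*} (s : Finset ι)
    (f : ι → R[X]) : (∏ i ∈ s, f i).reverse = ∏ i ∈ s, (f i).reverse := by
  induction s using Finset.cons_induction with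
  | empty => simpa using reverse_C (1 : R)
  | cons a s ha ih => rw [prod_cons, prod_cons, reverse_mul_of_domain, ih]

theorem natDegree_prod_geom_sum_X {R : Type*} [CommSemiring R] [Nontrivial R] {ι : Type*}
    (s : Finset ι) (n : ι → ℕ) (hn : ∀ k ∈ s, n k ≠ 0) :
    (∏ k ∈ s, ∑ j ∈ range (n k), (X : R[X]) ^ j).natDegree = ∑ k ∈ s, (n k - 1) := by
  rw [natDegree_prod_of_monic _ _ fun k hk => monic_geom_sum_X (hn k hk)]
  simp only [natDegree_geom_sum_X]

theorem reverse_prod_geom_sum_X {R : Type*} [CommSemiring R] [NoZeroDivisors R] {ι : Type*}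
    (s : Finset ι) (n : ι → ℕ) :
    (∏ k ∈ s, ∑ j ∈ range (n k), (X : R[X]) ^ j).reverse = ∏ k ∈ s, ∑ j ∈ range (n k), X ^ j := by
  simp only [reverse_prod, reverse_geom_sum_X]

end Polynomial

theorem sum_Icc_eq_sum_range_sub {M : Type*} [AddCommMonoid M] (f : ℕ → M) (a b : ℕ) :
    ∑ v ∈ Icc a b, f v = ∑ i ∈ range (b + 1 - a), f (b - i) := by
  refine sum_nbij' (b - ·) (b - ·) ?_ ?_ ?_ ?_ ?_ <;>
    intro i hi <;> simp only [mem_Icc, mem_range] at hi ⊢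
  all_goals first | omega | (congr 1; omega)

theorem sum_Icc_sub_smul_sum_Icc_of_symm {R M : Type*} [Ring R] [AddCommGroup M] [Module R M]
    (c : ℕ → R) (e : ℕ → M) (W : ℕ) (hsymm : ∀ v ≤ W, c (W - v) = c v) (hvanish : c (W + 1) = 0) :
    ∑ u ∈ Icc ((W + 1) / 2) W, (c u - c (u + 1)) • ∑ v ∈ Icc (W - u) u, e v =
      ∑ v ∈ range (W + 1), c v • e v := by
  simp_rw [smul_sum]
  rw [sum_comm' (t' := range (W + 1)) (s' := fun v => Icc (max v (W - v)) W)
    (fun u v => by simp only [mem_Icc, mem_range, max_le_iff]; omega)]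
  refine sum_congr rfl fun v hv => ?_
  have hv : v ≤ W := Nat.lt_succ_iff.mp (mem_range.mp hv)
  have htel : ∑ u ∈ Icc (max v (W - v)) W, (c u - c (u + 1)) = c (max v (W - v)) := by
    simpa only [Pi.neg_apply, neg_sub_neg, hvanish, sub_zero] using
      sum_Icc_sub (max_le hv (W.sub_le v)) (-c)
  rw [← sum_smul, htel]
  rcases le_total (W - v) v with h | h
  · rw [max_eq_left h]
  · rw [max_eq_right h, hsymm v hv]

section Laurent

variable {R : Type*} [CommSemiring R]

theorem LaurentPolynomial.T_sum {ι : Type*} (s : Finset ι) (f : ι → ℤ) :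
    (T (∑ i ∈ s, f i) : R[T;T⁻¹]) = ∏ i ∈ s, T (f i) := by
  induction s using Finset.cons_induction with
  | empty => simp
  | cons a s ha ih => rw [sum_cons, prod_cons, T_add, ih]

theorem sum_range_T_sub_two_mul (n : ℕ) :
    ∑ j ∈ range n, (T ((n : ℤ) - 1 - 2 * j) : R[T;T⁻¹]) = T (1 - n) * ∑ j ∈ range n, T 2 ^ j := by
  rw [← sum_range_reflect, mul_sum]
  refine sum_congr rfl fun j hj => ?_
  have hj : j < n := mem_range.mp hj
  rw [T_pow, ← T_add]
  congr 1
  omega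

theorem prod_sum_range_T_sub_two_mul {ι : Type*} (s : Finset ι) (n : ι → ℕ) :
    ∏ k ∈ s, ∑ j ∈ range (n k), (T ((n k : ℤ) - 1 - 2 * j) : R[T;T⁻¹]) =
      T (∑ k ∈ s, (1 - (n k : ℤ))) * aeval (T 2) (∏ k ∈ s, ∑ j ∈ range (n k), (X : ℕ[X]) ^ j) := by
  simp only [sum_range_T_sub_two_mul, prod_mul_distrib, T_sum, map_prod, map_sum, map_pow, aeval_X]

theorem T_neg_mul_aeval_T_two {p : ℕ[X]} {W : ℕ} (hp : p.natDegree ≤ W) :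
    T (-W) * aeval (T 2) p = ∑ v ∈ range (W + 1), p.coeff v • (T (2 * v - W) : R[T;T⁻¹]) := by
  rw [aeval_eq_sum_range' (Nat.lt_succ_of_le hp), mul_sum]
  refine sum_congr rfl fun v _ => ?_
  rw [mul_smul_comm, T_pow, ← T_add]
  congr 2
  ring

end Laurent

theorem complete_homogeneous_schur_expansion_general
    (g : ℕ) (N : Fin g → ℕ) (hN : ∀ k, 1 ≤ N k)
    (W : ℕ) (hW : W = ∑ k, N k - g) :
    (∏ k : Fin g, ∑ j ∈ Finset.range (N k),
        (T ((N k : ℤ) - 1 - 2 * (j : ℤ)) : LaurentPolynomial ℤ)) =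
      ∑ u ∈ Finset.Icc ((W + 1) / 2) W,
        LaurentPolynomial.C ((trinomialCoeff g N u : ℤ) - (trinomialCoeff g N (u + 1) : ℤ)) *
          ∑ i ∈ Finset.range (2 * u - W + 1),
            T ((2 * (u : ℤ) - (W : ℤ)) - 2 * (i : ℤ)) := by
  set P : ℕ[X] := ∏ k : Fin g, ∑ j ∈ range (N k), X ^ j
  have hcoeff : ∀ u, trinomialCoeff g N u = P.coeff u := fun _ => rfl
  have hWdeg : W = ∑ k, (N k - 1) := by
    rw [hW, sum_tsub_distrib _ fun k _ => hN k, sum_const, card_univ, Fintype.card_fin, smul_eq_mul,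
      mul_one]
  have hdeg : P.natDegree = W := by
    rw [hWdeg, natDegree_prod_geom_sum_X _ _ fun k _ => Nat.one_le_iff_ne_zero.mp (hN k)]
  have hsymm : ∀ v ≤ W, P.coeff (W - v) = P.coeff v :=
    hdeg ▸ fun v => coeff_natDegree_sub_of_reverse_eq (reverse_prod_geom_sum_X _ _)
  have hvanish : P.coeff (W + 1) = 0 := coeff_eq_zero_of_natDegree_lt (by omega)
  have hexp : ∑ k, (1 - (N k : ℤ)) = -W := by
    rw [hWdeg]
    push_cast [Nat.cast_sub (hN _)]
    simp
  rw [prod_sum_range_T_sub_two_mul, hexp, T_neg_mul_aeval_T_two hdeg.le]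
  simp_rw [← Nat.cast_smul_eq_nsmul ℤ]
  rw [← sum_Icc_sub_smul_sum_Icc_of_symm (fun v => (P.coeff v : ℤ)) (fun v => T (2 * v - W)) W
    (fun v hv => congrArg _ (hsymm v hv)) (by simp [hvanish])]
  refine sum_congr rfl fun u hu => ?_
  rw [mem_Icc] at hu
  rw [LaurentPolynomial.smul_eq_C_mul, sum_Icc_eq_sum_range_sub, hcoeff, hcoeff]
  refine congrArg _ (sum_congr (by congr 1; omega) fun i hi => ?_)
  rw [mem_range] at hi
  congr 1
  omega

/-- In `ℤ[t,t⁻¹]`, with `W = ∑ N k - g`: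
`∏_{k<g} (∑_{j<N k} t^{N k - 1 - 2j})
  = ∑_{u=⌈W/2⌉}^{W} (T(𝐍,u) - T(𝐍,u+1)) · (∑_{i=0}^{2u-W} t^{2u-W-2i})`. -/
theorem complete_homogeneous_schur_expansion
    (g : ℕ) (hg : 1 ≤ g) (N : Fin g → ℕ) (hN : ∀ k, 1 ≤ N k)
    (W : ℕ) (hW : W = ∑ k, N k - g) :
    (∏ k : Fin g, ∑ j ∈ Finset.range (N k),
        (T ((N k : ℤ) - 1 - 2 * (j : ℤ)) : LaurentPolynomial ℤ)) =
      ∑ u ∈ Finset.Icc ((W + 1) / 2) W,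
        LaurentPolynomial.C ((trinomialCoeff g N u : ℤ) - (trinomialCoeff g N (u + 1) : ℤ)) *
          ∑ i ∈ Finset.range (2 * u - W + 1),
            T ((2 * (u : ℤ) - (W : ℤ)) - 2 * (i : ℤ)) :=
  complete_homogeneous_schur_expansion_general g N hN W hW
end

section
/- Fix integers c ≥ 1, 1 ≤ i ≤ c, g ≥ 1 and p ≥ 1. Let P be a moderate multi-sequence indexed by c-tuples of positive integers, and let Q be a multi-sequence of Laurent polynomials over ℂ indexed by pairs (𝐍, u) where 𝐍 is a g-tuple of positive integers and u ∈ {0, 1, …, |𝐍| − g}, such that Q is moderate (with bounds polynomial in |𝐍|). Define a multi-sequence R indexed by (c + g − 1)-tuples of positive integers by R_{M_1,…,M_{i−1},𝐍,M_{i+1},…,M_c}(A) = ∑_{u=0}^{|𝐍|−g} Q_{𝐍,u}(A) · sgn((2u − (|𝐍|−g))p + 1) · P_{M_1,…,M_{i−1}, |(2u − (|𝐍|−g))p + 1|, M_{i+1},…,M_c}(A). Then R is moderate. (This generalized cabling operation is the operation the paper's cabling formula performs on colored Jones polynomials; closure of moderateness under it shows that all links obtained from the unknot by repeated cabling and connected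 sum have moderate colored Jones polynomials.) -/
/-
Each term of the cabling sum is a product `Q_{𝐍,u} · P_M` whose colour tuple `M` has size at most
`(p + 1)|K|`, because the inserted colour `|(2u - (|𝐍| - g))p + 1|` is at most `p|𝐍| + 1`. So both
factors have exponents and coefficients bounded polynomially in `|K|`. Exponents add under
multiplication, and a coefficient of a product is a sum over the support of one factor, which
has at most `2B + 1` elements when its exponents lie in `[-B, B]`; hence the bounds multiply.
Summing at most `|K|` such terms keeps the bound polynomial.
-/

open LaurentPolynomial

/-- A multi-sequence of Laurent polynomials over `ℂ`, indexed by tuples of positive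
integers, is *moderate* if there are constants `C, m > 0` such that for every index `𝐍`
the absolute values of the maximal degree, the minimal degree (i.e. of every exponent
carrying a nonzero coefficient) and of all coefficients are less than `C·|𝐍|^m`, where
`|𝐍|` is the sum of the entries of `𝐍`. -/
def Moderate {ι : Type*} [Fintype ι] (P : (ι → ℕ+) → LaurentPolynomial ℂ) : Prop :=
  ∃ C m : ℝ, 0 < C ∧ 0 < m ∧ ∀ N : ι → ℕ+,
    (∀ j : ℤ, (P N).coeff j ≠ 0 → |(j : ℝ)| < C * (∑ k, ((N k : ℕ) : ℝ)) ^ m) ∧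
    (∀ j : ℤ, ‖(P N).coeff j‖ < C * (∑ k, ((N k : ℕ) : ℝ)) ^ m)

/-- The generalized cabling operation: from `P` (indexed by `c`-tuples) and `Q` (indexed
by pairs `(𝐍,u)` of a `g`-tuple and `0 ≤ u ≤ |𝐍|-g`) form the multi-sequence indexed by
`(c+g-1)`-tuples (the tuple entries other than the `i`-th one, together with `𝐍`)
`R = ∑_{u=0}^{|𝐍|-g} Q_{𝐍,u} · sgn((2u-(|𝐍|-g))p+1) · P_{…,|(2u-(|𝐍|-g))p+1|,…}`,
the color `|(2u-(|𝐍|-g))p+1|` being inserted in the `i`-th slot.  (When the integer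
`(2u-(|𝐍|-g))p+1` is zero its sign is zero, so the corresponding term vanishes and the
dummy color `1` used there is irrelevant.) -/
noncomputable def cablingOp (c : ℕ) (i : Fin c) (g p : ℕ)
    (P : (Fin c → ℕ+) → LaurentPolynomial ℂ)
    (Q : (Fin g → ℕ+) → ℕ → LaurentPolynomial ℂ)
    (K : ({k : Fin c // k ≠ i} ⊕ Fin g) → ℕ+) : LaurentPolynomial ℂ :=
  ∑ u ∈ Finset.range ((∑ k, ((K (Sum.inr k) : ℕ))) - g + 1),
    ((((2 * (u : ℤ) - ((∑ k, (((K (Sum.inr k) : ℕ)) : ℤ)) - g)) * p + 1).sign : ℂ)) •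
      (Q (fun k => K (Sum.inr k)) u *
        P (fun k => if h : k = i then
            ⟨max ((2 * (u : ℤ) - ((∑ k', (((K (Sum.inr k') : ℕ)) : ℤ)) - g)) * p + 1).natAbs 1,
              lt_of_lt_of_le Nat.one_pos (le_max_right _ _)⟩
          else K (Sum.inl ⟨k, h⟩)))

open Finset

namespace LaurentPolynomial

variable {R : Type*} [SeminormedRing R]

def BoundedBy (f : R[T;T⁻¹]) (B : ℝ) : Prop :=
  (∀ j : ℤ, f.coeff j ≠ 0 → |(j : ℝ)| ≤ B) ∧ ∀ j : ℤ, ‖f.coeff j‖ ≤ B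

namespace BoundedBy

variable {f g : R[T;T⁻¹]} {B B' : ℝ}

theorem nonneg (hf : f.BoundedBy B) : 0 ≤ B := (norm_nonneg _).trans (hf.2 0)

theorem mono (hf : f.BoundedBy B) (hB : B ≤ B') : f.BoundedBy B' :=
  ⟨fun j hj => (hf.1 j hj).trans hB, fun j => (hf.2 j).trans hB⟩

theorem card_support_le (hf : f.BoundedBy B) : (#f.coeff.support : ℝ) ≤ 2 * B + 1 := by
  have hsub : f.coeff.support ⊆ Icc (-⌊B⌋) ⌊B⌋ := fun j hj => by
    rw [mem_Icc, ← abs_le, Int.le_floor, Int.cast_abs]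
    exact hf.1 j (Finsupp.mem_support_iff.mp hj)
  have hfloor : 0 ≤ ⌊B⌋ := Int.floor_nonneg.mpr hf.nonneg
  calc (#f.coeff.support : ℝ) ≤ #(Icc (-⌊B⌋) ⌊B⌋) := by exact_mod_cast card_le_card hsub
    _ = 2 * ⌊B⌋ + 1 := by
      rw [Int.card_Icc, show ⌊B⌋ + 1 - -⌊B⌋ = 2 * ⌊B⌋ + 1 by ring]
      exact_mod_cast Int.toNat_of_nonneg (by omega)
    _ ≤ 2 * B + 1 := by linarith [Int.floor_le B]

theorem mul (hf : f.BoundedBy B) (hg : g.BoundedBy B') :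
    (f * g).BoundedBy ((2 * B + 1) * B * B' + B + B') := by
  have hB := hf.nonneg
  have hB' := hg.nonneg
  have hprod : 0 ≤ (2 * B + 1) * B * B' := by positivity
  refine ⟨fun j hj => ?_, fun j => ?_⟩
  · obtain ⟨x, hx, y, hy, rfl⟩ := mem_add.mp
      (AddMonoidAlgebra.support_coeff_mul_subset f g (Finsupp.mem_support_iff.mpr hj))
    calc |((x + y : ℤ) : ℝ)| ≤ |(x : ℝ)| + |(y : ℝ)| := by push_cast; exact abs_add_le _ _
      _ ≤ B + B' := add_le_add (hf.1 x (Finsupp.mem_support_iff.mp hx))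
          (hg.1 y (Finsupp.mem_support_iff.mp hy))
      _ ≤ _ := by linarith
  · rw [AddMonoidAlgebra.coeff_mul_apply_left, Finsupp.sum]
    calc ‖∑ x ∈ f.coeff.support, f.coeff x * g.coeff (-x + j)‖
        ≤ ∑ x ∈ f.coeff.support, B * B' := by
          refine (norm_sum_le _ _).trans (sum_le_sum fun x _ => ?_)
          exact (norm_mul_le _ _).trans (mul_le_mul (hf.2 x) (hg.2 _) (norm_nonneg _) hB)
      _ = #f.coeff.support * (B * B') := by rw [sum_const, nsmul_eq_mul]
      _ ≤ (2 * B + 1) * (B * B') := mul_le_mul_of_nonneg_right hf.card_support_le (by positivity)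
      _ ≤ _ := by linarith

theorem smul {z : R} (hz : ‖z‖ ≤ 1) (hf : f.BoundedBy B) : (z • f).BoundedBy B := by
  refine ⟨fun j hj => hf.1 j (right_ne_zero_of_mul hj), fun j => ?_⟩
  calc ‖z * f.coeff j‖ ≤ ‖z‖ * ‖f.coeff j‖ := norm_mul_le _ _
    _ ≤ 1 * B := mul_le_mul hz (hf.2 j) (norm_nonneg _) zero_le_one
    _ = B := one_mul B

end BoundedBy

theorem boundedBy_sum {ι : Type*} {s : Finset ι} {f : ι → R[T;T⁻¹]} {A B : ℝ} (hs : s.Nonempty)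
    (hA : #s ≤ A) (hf : ∀ u ∈ s, (f u).BoundedBy B) : (∑ u ∈ s, f u).BoundedBy (A * B) := by
  obtain ⟨u₀, hu₀⟩ := hs
  have hB := (hf u₀ hu₀).nonneg
  have hA₁ : 1 ≤ A := le_trans (by exact_mod_cast card_pos.mpr ⟨u₀, hu₀⟩) hA
  refine ⟨fun j hj => ?_, fun j => ?_⟩
  · rw [AddMonoidAlgebra.coeff_sum, Finsupp.finsetSum_apply] at hj
    obtain ⟨u, hu, hne⟩ := exists_ne_zero_of_sum_ne_zero hj
    exact (hf u hu).1 j hne |>.trans (le_mul_of_one_le_left hB hA₁)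
  · rw [AddMonoidAlgebra.coeff_sum, Finsupp.finsetSum_apply]
    calc ‖∑ u ∈ s, (f u).coeff j‖ ≤ #s * B := by
          rw [← nsmul_eq_mul]
          exact (norm_sum_le _ _).trans (sum_le_card_nsmul _ _ _ fun u hu => (hf u hu).2 j)
      _ ≤ A * B := mul_le_mul_of_nonneg_right hA hB

variable {f : R[T;T⁻¹]} {x C : ℝ}

theorem boundedBy_pow_ceil_of_lt_rpow {m : ℝ} (hx : 1 ≤ x) (hC : 0 ≤ C)
    (h : (∀ j : ℤ, f.coeff j ≠ 0 → |(j : ℝ)| < C * x ^ m) ∧ ∀ j : ℤ, ‖f.coeff j‖ < C * x ^ m) :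
    f.BoundedBy (C * x ^ ⌈m⌉₊) := by
  have hpow : C * x ^ m ≤ C * x ^ ⌈m⌉₊ := by
    rw [← Real.rpow_natCast]
    exact mul_le_mul_of_nonneg_left (Real.rpow_le_rpow_of_exponent_le hx (Nat.le_ceil m)) hC
  exact ⟨fun j hj => (h.1 j hj).le.trans hpow, fun j => (h.2 j).le.trans hpow⟩

theorem BoundedBy.lt_rpow {n : ℕ} (hx : 1 ≤ x) (hf : f.BoundedBy (C * x ^ n)) :
    (∀ j : ℤ, f.coeff j ≠ 0 → |(j : ℝ)| < (|C| + 1) * x ^ ((n : ℝ) + 1)) ∧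
      ∀ j : ℤ, ‖f.coeff j‖ < (|C| + 1) * x ^ ((n : ℝ) + 1) := by
  have hlt : C * x ^ n < (|C| + 1) * x ^ ((n : ℝ) + 1) := by
    rw [← Nat.cast_succ, Real.rpow_natCast, pow_succ]
    have hxn : 0 < x ^ n := pow_pos (by linarith) n
    calc C * x ^ n ≤ |C| * x ^ n := by gcongr; exact le_abs_self C
      _ ≤ |C| * (x ^ n * x) := by gcongr; exact le_mul_of_one_le_right hxn.le hx
      _ < (|C| + 1) * (x ^ n * x) := by nlinarith
  exact ⟨fun j hj => (hf.1 j hj).trans_lt hlt, fun j => (hf.2 j).trans_lt hlt⟩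

end LaurentPolynomial

def tupleSize {ι : Type*} [Fintype ι] (N : ι → ℕ+) : ℕ := ∑ k, (N k : ℕ)

section tupleSize

variable {ι κ : Type*} [Fintype ι] [Fintype κ]

theorem cast_tupleSize (N : ι → ℕ+) : (tupleSize N : ℝ) = ∑ k, ((N k : ℕ) : ℝ) :=
  Nat.cast_sum _ _

theorem card_le_tupleSize (N : ι → ℕ+) : Fintype.card ι ≤ tupleSize N := by
  rw [Fintype.card_eq_sum_ones]
  exact sum_le_sum fun k _ => (N k).pos

theorem one_le_tupleSize [Nonempty ι] (N : ι → ℕ+) : 1 ≤ tupleSize N :=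
  Fintype.card_pos.trans_le (card_le_tupleSize N)

theorem tupleSize_sum (K : ι ⊕ κ → ℕ+) :
    tupleSize K = tupleSize (fun k => K (Sum.inl k)) + tupleSize (fun k => K (Sum.inr k)) :=
  Fintype.sum_sum_type _

theorem tupleSize_dite [DecidableEq ι] (i : ι) (a : ℕ+) (L : {k // k ≠ i} → ℕ+) :
    tupleSize (fun k => if h : k = i then a else L ⟨k, h⟩) = a + tupleSize L := by
  rw [tupleSize, Fintype.sum_eq_add_sum_subtype_ne _ i]
  simp only [dite_true]
  congr 1
  exact sum_congr rfl fun k _ => by rw [dif_neg k.2]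

end tupleSize

section Moderate
variable {ι : Type*} [Fintype ι] [Nonempty ι] {P : (ι → ℕ+) → ℂ[T;T⁻¹]}

theorem Moderate.exists_boundedBy (hP : Moderate P) :
    ∃ C : ℝ, 0 ≤ C ∧ ∃ n : ℕ, ∀ N, (P N).BoundedBy (C * tupleSize N ^ n) := by
  obtain ⟨C, m, hC, -, hP⟩ := hP
  refine ⟨C, hC.le, ⌈m⌉₊, fun N => boundedBy_pow_ceil_of_lt_rpow ?_ hC.le ?_⟩
  · exact_mod_cast one_le_tupleSize N
  · simpa only [cast_tupleSize] using hP N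

theorem moderate_of_boundedBy {C : ℝ} {n : ℕ} (h : ∀ N, (P N).BoundedBy (C * tupleSize N ^ n)) :
    Moderate P := by
  refine ⟨|C| + 1, n + 1, by positivity, by positivity, fun N => ?_⟩
  rw [← cast_tupleSize]
  exact (h N).lt_rpow (by exact_mod_cast one_le_tupleSize N)

end Moderate

theorem norm_intCast_sign_le_one (x : ℤ) : ‖((x.sign : ℤ) : ℂ)‖ ≤ 1 := by
  rcases Int.sign_trichotomy x with h | h | h <;> simp [h]

theorem abs_cablingColor_le {u n p : ℤ} (hu : 0 ≤ u) (hun : u ≤ n) (hp : 0 ≤ p) :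
    |(2 * u - n) * p + 1| ≤ n * p + 1 := by
  rw [abs_le]
  constructor <;> nlinarith

theorem natAbs_cablingColor_le {u S g p : ℕ} (hgS : g ≤ S) (hu : u ≤ S - g) :
    ((2 * (u : ℤ) - ((S : ℤ) - g)) * p + 1).natAbs ≤ S * p + 1 := by
  have h := abs_cablingColor_le (n := (S : ℤ) - g) (p := p) (Nat.cast_nonneg u) (by omega)
    (Nat.cast_nonneg p)
  zify
  nlinarith

theorem boundedBy_cablingOp {c g p : ℕ} {i : Fin c} (hg : 1 ≤ g)
    {P : (Fin c → ℕ+) → ℂ[T;T⁻¹]} {Q : (Fin g → ℕ+) → ℕ → ℂ[T;T⁻¹]} {C₁ C₂ : ℝ} {n₁ n₂ : ℕ}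
    (hC₁ : 0 ≤ C₁) (hC₂ : 0 ≤ C₂) (hP : ∀ M, (P M).BoundedBy (C₁ * tupleSize M ^ n₁))
    (hQ : ∀ N u, u ≤ tupleSize N - g → (Q N u).BoundedBy (C₂ * tupleSize N ^ n₂))
    (K : {k : Fin c // k ≠ i} ⊕ Fin g → ℕ+) :
    (cablingOp c i g p P Q K).BoundedBy (tupleSize K *
      ((2 * (C₂ * tupleSize K ^ n₂) + 1) * (C₂ * tupleSize K ^ n₂) *
        (C₁ * (p + 1) ^ n₁ * tupleSize K ^ n₁) + C₂ * tupleSize K ^ n₂ +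
          C₁ * (p + 1) ^ n₁ * tupleSize K ^ n₁)) := by
  set N : Fin g → ℕ+ := fun k => K (Sum.inr k)
  set S := tupleSize N with hS
  have hgS : g ≤ S := by simpa using card_le_tupleSize N
  have hK : tupleSize K = tupleSize (fun k => K (Sum.inl k)) + S := tupleSize_sum K
  have hM : ∀ a : ℕ+, (a : ℕ) ≤ S * p + 1 →
      (tupleSize (fun k => if h : k = i then a else K (Sum.inl ⟨k, h⟩)) : ℝ) ≤
        (p + 1) * tupleSize K := by
    intro a ha
    rw [tupleSize_dite i a (fun k => K (Sum.inl k)), hK]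
    have hS₁ : 1 ≤ S := hg.trans hgS
    exact_mod_cast (by nlinarith : (a : ℕ) + tupleSize (fun k => K (Sum.inl k)) ≤
      (p + 1) * (tupleSize (fun k => K (Sum.inl k)) + S))
  have hSZ : ∑ k, ((K (Sum.inr k) : ℕ) : ℤ) = S := by simp [hS, tupleSize, N]
  unfold cablingOp
  refine boundedBy_sum nonempty_range_add_one ?_ fun u hu => ?_
  · rw [card_range]
    exact_mod_cast (by omega : S - g + 1 ≤ tupleSize K)
  · have hu : u ≤ S - g := Nat.lt_succ_iff.mp (mem_range.mp hu)
    refine .smul (norm_intCast_sign_le_one _) (.mul ((hQ N u hu).mono ?_) ((hP _).mono ?_))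
    · gcongr
      exact_mod_cast hK ▸ Nat.le_add_left S _
    · rw [mul_assoc, ← mul_pow]
      gcongr
      have hcolor := natAbs_cablingColor_le (p := p) hgS hu
      rw [← hSZ] at hcolor
      exact hM _ (max_le hcolor (Nat.le_add_left 1 _))

theorem cabling_bound_le_pow {x a b : ℝ} {q r : ℕ} (hx : 1 ≤ x) (ha : 0 ≤ a) (hb : 0 ≤ b) :
    x * ((2 * (a * x ^ q) + 1) * (a * x ^ q) * (b * x ^ r) + a * x ^ q + b * x ^ r) ≤
      ((2 * a + 1) * a * b + a + b) * x ^ (2 * q + r + 1) := by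
  have h₁ : x ^ (q + r + 1) ≤ x ^ (2 * q + r + 1) := pow_le_pow_right₀ hx (by omega)
  have h₂ : x ^ (q + 1) ≤ x ^ (2 * q + r + 1) := pow_le_pow_right₀ hx (by omega)
  have h₃ : x ^ (r + 1) ≤ x ^ (2 * q + r + 1) := pow_le_pow_right₀ hx (by omega)
  have hexpand : x * ((2 * (a * x ^ q) + 1) * (a * x ^ q) * (b * x ^ r) + a * x ^ q + b * x ^ r) =
      2 * a ^ 2 * b * x ^ (2 * q + r + 1) + a * b * x ^ (q + r + 1) + a * x ^ (q + 1) +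
        b * x ^ (r + 1) := by ring
  rw [hexpand]
  nlinarith [mul_le_mul_of_nonneg_left h₁ (mul_nonneg ha hb), mul_le_mul_of_nonneg_left h₂ ha,
    mul_le_mul_of_nonneg_left h₃ hb]

theorem moderate_cablingOp_general
    (c : ℕ) (i : Fin c) (g p : ℕ) (hg : 1 ≤ g)
    (P : (Fin c → ℕ+) → LaurentPolynomial ℂ) (hP : Moderate P)
    (Q : (Fin g → ℕ+) → ℕ → LaurentPolynomial ℂ)
    (hQ : ∃ C m : ℝ, 0 < C ∧ 0 < m ∧ ∀ (N : Fin g → ℕ+) (u : ℕ),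
      u ≤ (∑ k, (N k : ℕ)) - g →
        (∀ j : ℤ, (Q N u).coeff j ≠ 0 → |(j : ℝ)| < C * (∑ k, ((N k : ℕ) : ℝ)) ^ m) ∧
        (∀ j : ℤ, ‖(Q N u).coeff j‖ < C * (∑ k, ((N k : ℕ) : ℝ)) ^ m)) :
    Moderate (cablingOp c i g p P Q) := by
  have : Nonempty (Fin c) := ⟨i⟩
  have : Nonempty (Fin g) := ⟨⟨0, hg⟩⟩
  obtain ⟨C₁, hC₁, n₁, hP⟩ := hP.exists_boundedBy
  obtain ⟨C₂, m₂, hC₂, -, hQ⟩ := hQ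
  have hQ' (N : Fin g → ℕ+) (u : ℕ) (hu : u ≤ tupleSize N - g) :
      (Q N u).BoundedBy (C₂ * tupleSize N ^ ⌈m₂⌉₊) :=
    boundedBy_pow_ceil_of_lt_rpow (by exact_mod_cast one_le_tupleSize N) hC₂.le
      (by simpa only [cast_tupleSize] using hQ N u hu)
  apply moderate_of_boundedBy
  intro K
  refine (boundedBy_cablingOp hg hC₁ hC₂.le hP hQ' K).mono ?_
  exact cabling_bound_le_pow (Nat.one_le_cast.mpr (one_le_tupleSize K)) hC₂.le (by positivity)

/-- If `P` is moderate and `Q` is moderate (with bounds polynomial in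
`|𝐍|`, for `0 ≤ u ≤ |𝐍| - g`), then the generalized cabling operation applied to `P`
and `Q` produces a moderate multi-sequence. -/
theorem moderate_cablingOp
    (c : ℕ) (hc : 1 ≤ c) (i : Fin c) (g p : ℕ) (hg : 1 ≤ g) (hp : 1 ≤ p)
    (P : (Fin c → ℕ+) → LaurentPolynomial ℂ) (hP : Moderate P)
    (Q : (Fin g → ℕ+) → ℕ → LaurentPolynomial ℂ)
    (hQ : ∃ C m : ℝ, 0 < C ∧ 0 < m ∧ ∀ (N : Fin g → ℕ+) (u : ℕ),
      u ≤ (∑ k, (N k : ℕ)) - g →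
        (∀ j : ℤ, (Q N u).coeff j ≠ 0 → |(j : ℝ)| < C * (∑ k, ((N k : ℕ) : ℝ)) ^ m) ∧
        (∀ j : ℤ, ‖(Q N u).coeff j‖ < C * (∑ k, ((N k : ℕ) : ℝ)) ^ m)) :
    Moderate (cablingOp c i g p P Q) :=
  moderate_cablingOp_general c i g p hg P hP Q hQ
end

section
/- Fix integers c ≥ 1 and s ≥ 0. Let P be a moderate multi-sequence of Laurent polynomials over ℂ indexed by c-tuples of positive integers, and suppose that for each N ≥ 1 the quantum integer [N] = ∑_{j=0}^{N−1} A^{2N−2−4j} (so that [N] = (A^{2N} − A^{−2N})/(A^2 − A^{−2})) satisfies: [N]^s divides P_{(N,…,N)} in the ring of Laurent polynomials ℂ[A, A^{−1}], with quotient Q_N := P_{(N,…,N)}/[N]^s. Then limsup_{N→∞} |Q_N(e^{iπ/2N})|^{1/N} ≤ 1; equivalently, lim_{N→∞} (2π/N) · log max(1, |Q_N(e^{iπ/2N})|) = 0. (This is the paper's proof that the normalized colored Jones polynomial of a zero-volume link has zero exponential growth rate at A = e^{iπ/2N}, establishing the volume conjecture for all zero-volume knots and links.) -/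
/-!
Since `[N]` vanishes at `e^{iπ/2N}`, the value `Q_N(e^{iπ/2N})` can only be controlled through
the coefficients of `Q_N`. Multiplying by `(A⁴ - 1)^s` and using
`(A⁴ - 1)·[N] = A^{2-2N}·(A^{4N} - 1)` turns the hypothesis into
`(A^{4N} - 1)^s · Q_N = A^{s(2N-2)} · (A⁴ - 1)^s · P_{(N,…,N)}`.
Multiplying by `A^a - 1` at most doubles the coefficients and widens the window of exponents by
`|a|`; dividing by `A^n - 1` with `n ≥ 1` keeps the window of exponents, and by telescoping each
coefficient of the quotient is a partial sum of coefficients of the dividend, hence bounded by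
their ℓ¹-norm. So the exponents and coefficients of `Q_N` grow polynomially in `N`, hence so does
`|Q_N|` on the unit circle, and `log max(1, |Q_N(e^{iπ/2N})|) = O(log N) = o(N)`.
-/

open LaurentPolynomial

/-- Evaluation of a Laurent polynomial `∑_j a_j A^j` at a nonzero complex number. -/
noncomputable def evalL (p : LaurentPolynomial ℂ) (z : ℂ) : ℂ :=
  ∑ j ∈ p.coeff.support, p.coeff j * z ^ j

/-- The quantum integer `[N] = ∑_{j=0}^{N-1} A^{2N-2-4j}`, as a Laurent polynomial. -/
noncomputable def qint (N : ℕ+) : LaurentPolynomial ℂ :=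
  ∑ j ∈ Finset.range (N : ℕ), T (2 * ((N : ℕ) : ℤ) - 2 - 4 * (j : ℤ))

open Filter

namespace LaurentPolynomial

lemma coeff_T_mul {R : Type*} [Semiring R] (a : ℤ) (p : LaurentPolynomial R) (j : ℤ) :
    (T a * p).coeff j = p.coeff (j - a) := by
  rw [T, AddMonoidAlgebra.coeff_single_mul_apply, one_mul, neg_add_eq_sub]

lemma coeff_T_sub_one_mul {R : Type*} [Ring R] (a : ℤ) (p : LaurentPolynomial R) (j : ℤ) :
    ((T a - 1) * p).coeff j = p.coeff (j - a) - p.coeff j := by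
  rw [sub_mul, one_mul, AddMonoidAlgebra.coeff_sub, Finsupp.sub_apply, coeff_T_mul]

lemma exists_coeff_add_mul_eq_zero {R : Type*} [Semiring R] (p : LaurentPolynomial R) (j : ℤ)
    {n : ℤ} (hn : n ≠ 0) : ∃ K : ℕ, p.coeff (j + K * n) = 0 := by
  have hinj : Function.Injective fun K : ℕ => j + K * n := fun a b hab => by
    simpa [hn] using hab
  obtain ⟨K, hK⟩ := Infinite.exists_notMem_finset (p.coeff.support.preimage _ hinj.injOn)
  exact ⟨K, by simpa using hK⟩

section Telescoping

variable {R : Type*} [Ring R] {n : ℤ} {p q : LaurentPolynomial R}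

lemma sum_coeff_add_mul_of_eq_T_sub_one_mul (hpq : p = (T n - 1) * q) (j : ℤ) (K : ℕ) :
    ∑ k ∈ Finset.range K, p.coeff (j + (k + 1) * n) = q.coeff j - q.coeff (j + K * n) := by
  induction K with
  | zero => simp
  | succ K ih =>
    rw [Finset.sum_range_succ, ih, hpq, coeff_T_sub_one_mul]
    push_cast
    rw [show j + (K + 1) * n - n = j + K * n by ring]
    abel

lemma sum_coeff_sub_mul_of_eq_T_sub_one_mul (hpq : p = (T n - 1) * q) (j : ℤ) (K : ℕ) :
    ∑ k ∈ Finset.range K, p.coeff (j - k * n) = q.coeff (j - K * n) - q.coeff j := by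
  induction K with
  | zero => simp
  | succ K ih =>
    rw [Finset.sum_range_succ, ih, hpq, coeff_T_sub_one_mul]
    push_cast
    rw [show j - K * n - n = j - (K + 1) * n by ring]
    abel

lemma exists_coeff_eq_sum_add_mul_of_eq_T_sub_one_mul (hn : n ≠ 0) (hpq : p = (T n - 1) * q)
    (j : ℤ) : ∃ K : ℕ, q.coeff j = ∑ k ∈ Finset.range K, p.coeff (j + (k + 1) * n) := by
  obtain ⟨K, hK⟩ := exists_coeff_add_mul_eq_zero q j hn
  exact ⟨K, by rw [sum_coeff_add_mul_of_eq_T_sub_one_mul hpq, hK, sub_zero]⟩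

lemma exists_coeff_eq_neg_sum_sub_mul_of_eq_T_sub_one_mul (hn : n ≠ 0)
    (hpq : p = (T n - 1) * q) (j : ℤ) :
    ∃ K : ℕ, q.coeff j = -∑ k ∈ Finset.range K, p.coeff (j - k * n) := by
  obtain ⟨K, hK⟩ := exists_coeff_add_mul_eq_zero q j (neg_ne_zero.mpr hn)
  refine ⟨K, ?_⟩
  rw [sum_coeff_sub_mul_of_eq_T_sub_one_mul hpq, sub_eq_add_neg (b := (K : ℤ) * n), ← mul_neg,
    hK, zero_sub, neg_neg]

end Telescoping

lemma sum_norm_coeff_comp_le_sum_support (p : LaurentPolynomial ℂ) {f : ℕ → ℤ}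
    (hf : Function.Injective f) (s : Finset ℕ) :
    ∑ k ∈ s, ‖p.coeff (f k)‖ ≤ ∑ j ∈ p.coeff.support, ‖p.coeff j‖ := by
  classical
  rw [← Finset.sum_image (f := fun j => ‖p.coeff j‖) fun a _ b _ hab => hf hab]
  calc ∑ j ∈ s.image f, ‖p.coeff j‖
      ≤ ∑ j ∈ s.image f ∪ p.coeff.support, ‖p.coeff j‖ :=
        Finset.sum_le_sum_of_subset_of_nonneg Finset.subset_union_left fun _ _ _ => norm_nonneg _
    _ = ∑ j ∈ p.coeff.support, ‖p.coeff j‖ :=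
        (Finset.sum_subset Finset.subset_union_right fun j _ hj => by
          rw [Finsupp.notMem_support_iff.mp hj, norm_zero]).symm

end LaurentPolynomial

def CoeffBoundedBy (p : LaurentPolynomial ℂ) (D : ℕ) : Prop :=
  (∀ j : ℤ, p.coeff j ≠ 0 → |j| ≤ D) ∧ ∀ j : ℤ, ‖p.coeff j‖ ≤ D

namespace CoeffBoundedBy

variable {p q : LaurentPolynomial ℂ} {D : ℕ} {n : ℤ}

lemma support_subset (h : CoeffBoundedBy p D) : p.coeff.support ⊆ Finset.Icc (-(D : ℤ)) D :=
  fun j hj => Finset.mem_Icc.mpr (abs_le.mp (h.1 j (Finsupp.mem_support_iff.mp hj)))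

lemma sum_norm_coeff_le (h : CoeffBoundedBy p D) :
    ∑ j ∈ p.coeff.support, ‖p.coeff j‖ ≤ ((2 * D + 1) * D : ℕ) := by
  calc ∑ j ∈ p.coeff.support, ‖p.coeff j‖
      ≤ ∑ j ∈ Finset.Icc (-(D : ℤ)) D, ‖p.coeff j‖ :=
        Finset.sum_le_sum_of_subset_of_nonneg h.support_subset fun _ _ _ => norm_nonneg _
    _ ≤ (Finset.Icc (-(D : ℤ)) D).card • (D : ℝ) :=
        Finset.sum_le_card_nsmul _ _ _ fun j _ => h.2 j
    _ = ((2 * D + 1) * D : ℕ) := by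
        rw [nsmul_eq_mul, Int.card_Icc, show (D + 1 - -D : ℤ).toNat = 2 * D + 1 by omega]
        push_cast
        rfl

lemma norm_evalL_le (h : CoeffBoundedBy p D) {z : ℂ} (hz : ‖z‖ = 1) :
    ‖evalL p z‖ ≤ ((2 * D + 1) * D : ℕ) :=
  calc ‖evalL p z‖ ≤ ∑ j ∈ p.coeff.support, ‖p.coeff j * z ^ j‖ := norm_sum_le _ _
    _ = ∑ j ∈ p.coeff.support, ‖p.coeff j‖ := by
        simp only [norm_mul, norm_zpow, hz, one_zpow, mul_one]
    _ ≤ ((2 * D + 1) * D : ℕ) := h.sum_norm_coeff_le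

lemma T_mul (h : CoeffBoundedBy p D) (a : ℤ) : CoeffBoundedBy (T a * p) (D + a.natAbs) := by
  refine ⟨fun j hj => ?_, fun j => ?_⟩
  · rw [coeff_T_mul] at hj
    calc |j| = |(j - a) + a| := by rw [sub_add_cancel]
      _ ≤ |j - a| + |a| := abs_add_le _ _
      _ ≤ ((D + a.natAbs : ℕ) : ℤ) := by
          push_cast
          exact add_le_add (h.1 _ hj) le_rfl
  · rw [coeff_T_mul]
    exact (h.2 _).trans (by exact_mod_cast Nat.le_add_right D a.natAbs)

lemma T_sub_one_mul (h : CoeffBoundedBy p D) (a : ℤ) :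
    CoeffBoundedBy ((T a - 1) * p) (2 * D + a.natAbs) := by
  refine ⟨fun j hj => ?_, fun j => ?_⟩
  · rw [coeff_T_sub_one_mul] at hj
    rcases (sub_ne_zero.mp hj).ne_or_ne 0 with hj | hj
    · have := (h.T_mul a).1 j (by rwa [coeff_T_mul])
      push_cast at this ⊢
      omega
    · have := h.1 j hj
      omega
  · rw [coeff_T_sub_one_mul]
    calc ‖p.coeff (j - a) - p.coeff j‖
        ≤ ‖p.coeff (j - a)‖ + ‖p.coeff j‖ := norm_sub_le _ _
      _ ≤ D + D := add_le_add (h.2 _) (h.2 _)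
      _ ≤ ((2 * D + a.natAbs : ℕ) : ℝ) := by
          push_cast
          linarith [Nat.cast_nonneg (α := ℝ) a.natAbs]

lemma T_sub_one_pow_mul (h : CoeffBoundedBy p D) (a : ℤ) (s : ℕ) :
    CoeffBoundedBy ((T a - 1) ^ s * p) ((fun D => 2 * D + a.natAbs)^[s] D) := by
  induction s generalizing p D with
  | zero => simpa using h
  | succ s ih =>
    rw [Function.iterate_succ_apply, pow_succ, mul_assoc]
    exact ih (h.T_sub_one_mul a)

lemma abs_le_of_eq_T_sub_one_mul (h : CoeffBoundedBy p D) (hn : 0 < n)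
    (hpq : p = (T n - 1) * q) {j : ℤ} (hj : q.coeff j ≠ 0) : |j| ≤ D := by
  obtain ⟨K, hK⟩ := exists_coeff_eq_sum_add_mul_of_eq_T_sub_one_mul hn.ne' hpq j
  obtain ⟨K', hK'⟩ := exists_coeff_eq_neg_sum_sub_mul_of_eq_T_sub_one_mul hn.ne' hpq j
  obtain ⟨k, -, hk⟩ := Finset.exists_ne_zero_of_sum_ne_zero (hK ▸ hj)
  obtain ⟨k', -, hk'⟩ := Finset.exists_ne_zero_of_sum_ne_zero (neg_ne_zero.mp (hK' ▸ hj))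
  have hup := abs_le.mp (h.1 _ hk)
  have hdown := abs_le.mp (h.1 _ hk')
  have hk_nonneg : 0 ≤ ((k : ℤ) + 1) * n := by positivity
  have hk'_nonneg : 0 ≤ (k' : ℤ) * n := by positivity
  exact abs_le.mpr ⟨by linarith, by linarith⟩

lemma of_eq_T_sub_one_mul (h : CoeffBoundedBy p D) (hn : 0 < n) (hpq : p = (T n - 1) * q) :
    CoeffBoundedBy q ((2 * D + 1) * D) := by
  refine ⟨fun j hj => (h.abs_le_of_eq_T_sub_one_mul hn hpq hj).trans ?_, fun j => ?_⟩
  · exact_mod_cast Nat.le_mul_of_pos_left D (by omega)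
  obtain ⟨K, hK⟩ := exists_coeff_eq_sum_add_mul_of_eq_T_sub_one_mul hn.ne' hpq j
  have hinj : Function.Injective fun k : ℕ => j + (k + 1) * n := fun a b hab => by
    simpa [hn.ne'] using hab
  calc ‖q.coeff j‖
      ≤ ∑ k ∈ Finset.range K, ‖p.coeff (j + (k + 1) * n)‖ := hK ▸ norm_sum_le _ _
    _ ≤ ∑ i ∈ p.coeff.support, ‖p.coeff i‖ := sum_norm_coeff_comp_le_sum_support p hinj _
    _ ≤ ((2 * D + 1) * D : ℕ) := h.sum_norm_coeff_le

lemma of_eq_T_sub_one_pow_mul (hn : 0 < n) (s : ℕ) (h : CoeffBoundedBy ((T n - 1) ^ s * q) D) :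
    CoeffBoundedBy q ((fun D => (2 * D + 1) * D)^[s] D) := by
  induction s generalizing q with
  | zero => simpa using h
  | succ s ih =>
    rw [pow_succ, mul_assoc] at h
    rw [Function.iterate_succ_apply']
    exact (ih h).of_eq_T_sub_one_mul hn rfl

end CoeffBoundedBy

lemma T_mul_T_sub_one_mul_qint (N : ℕ+) :
    T (2 * (N : ℤ) - 2) * ((T 4 - 1) * qint N) = T (4 * (N : ℤ)) - 1 := by
  have hstep (j : ℕ) : (T (2 * (N : ℤ) - 2) : LaurentPolynomial ℂ) *
      ((T 4 - 1) * T (2 * (N : ℤ) - 2 - 4 * j)) =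
        T (4 * (N : ℤ) - 4 * j) - T (4 * (N : ℤ) - 4 * (j + 1 : ℕ)) := by
    rw [sub_mul, one_mul, mul_sub, ← T_add, ← T_add, ← T_add]
    congr 2 <;> push_cast <;> ring
  rw [qint, Finset.mul_sum, Finset.mul_sum]
  simp_rw [hstep]
  rw [Finset.sum_range_sub' (fun j : ℕ => (T (4 * (N : ℤ) - 4 * j) : LaurentPolynomial ℂ))]
  simp [T_zero]

lemma T_mul_T_sub_one_pow_mul_eq_of_eq_qint_pow_mul {N : ℕ+} {s : ℕ}
    {p q : LaurentPolynomial ℂ} (hpq : p = qint N ^ s * q) :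
    T (s * (2 * (N : ℤ) - 2)) * ((T 4 - 1) ^ s * p) = (T (4 * (N : ℤ)) - 1) ^ s * q := by
  rw [← T_mul_T_sub_one_mul_qint, mul_pow, mul_pow, T_pow, hpq]
  ring

lemma CoeffBoundedBy.of_eq_qint_pow_mul {N : ℕ+} {s D : ℕ} {p q : LaurentPolynomial ℂ}
    (h : CoeffBoundedBy p D) (hpq : p = qint N ^ s * q) :
    CoeffBoundedBy q
      ((fun D => (2 * D + 1) * D)^[s] ((fun D => 2 * D + 4)^[s] D + s * (2 * N - 2))) := by
  have hnatAbs : (s * (2 * (N : ℤ) - 2)).natAbs = s * (2 * N - 2) := by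
    have := N.pos
    zify [show 2 ≤ 2 * (N : ℕ) by omega]
    exact abs_of_nonneg (by nlinarith)
  have hbound := (h.T_sub_one_pow_mul 4 s).T_mul (s * (2 * (N : ℤ) - 2))
  rw [T_mul_T_sub_one_pow_mul_eq_of_eq_qint_pow_mul hpq, hnatAbs] at hbound
  exact hbound.of_eq_T_sub_one_pow_mul (by positivity) s

def PolyBounded (f : ℕ+ → ℕ) : Prop := ∃ K k : ℕ, ∀ N : ℕ+, f N ≤ K * (N : ℕ) ^ k

namespace PolyBounded

lemma const (c : ℕ) : PolyBounded fun _ => c := ⟨c, 0, fun N => by simp⟩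

lemma add {f g : ℕ+ → ℕ} (hf : PolyBounded f) (hg : PolyBounded g) :
    PolyBounded fun N => f N + g N := by
  obtain ⟨K, k, hK⟩ := hf
  obtain ⟨L, l, hL⟩ := hg
  refine ⟨K + L, max k l, fun N => ?_⟩
  have hk : (N : ℕ) ^ k ≤ (N : ℕ) ^ max k l := Nat.pow_le_pow_right N.pos (le_max_left _ _)
  have hl : (N : ℕ) ^ l ≤ (N : ℕ) ^ max k l := Nat.pow_le_pow_right N.pos (le_max_right _ _)
  calc f N + g N ≤ K * (N : ℕ) ^ max k l + L * (N : ℕ) ^ max k l :=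
        add_le_add ((hK N).trans (Nat.mul_le_mul_left _ hk))
          ((hL N).trans (Nat.mul_le_mul_left _ hl))
    _ = (K + L) * (N : ℕ) ^ max k l := (add_mul _ _ _).symm

lemma mul {f g : ℕ+ → ℕ} (hf : PolyBounded f) (hg : PolyBounded g) :
    PolyBounded fun N => f N * g N := by
  obtain ⟨K, k, hK⟩ := hf
  obtain ⟨L, l, hL⟩ := hg
  refine ⟨K * L, k + l, fun N => ?_⟩
  calc f N * g N ≤ (K * (N : ℕ) ^ k) * (L * (N : ℕ) ^ l) := Nat.mul_le_mul (hK N) (hL N)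
    _ = K * L * (N : ℕ) ^ (k + l) := by ring

lemma iterate {φ : ℕ → ℕ} (hφ : ∀ f, PolyBounded f → PolyBounded fun N => φ (f N))
    (s : ℕ) {f : ℕ+ → ℕ} (hf : PolyBounded f) : PolyBounded fun N => φ^[s] (f N) := by
  induction s generalizing f with
  | zero => exact hf
  | succ s ih => exact ih (hφ f hf)

lemma ceil_mul_rpow {C a : ℝ} (hC : 0 ≤ C) (ha : 0 ≤ a) (m : ℝ) :
    PolyBounded fun N => ⌈C * (a * (N : ℕ)) ^ m⌉₊ := by
  refine ⟨⌈C * a ^ m⌉₊, ⌈m⌉₊, fun N => Nat.ceil_le.mpr ?_⟩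
  have hN : (1 : ℝ) ≤ (N : ℕ) := by exact_mod_cast N.pos
  calc C * (a * (N : ℕ)) ^ m = C * a ^ m * ((N : ℕ) : ℝ) ^ m := by
        rw [Real.mul_rpow ha (by positivity), mul_assoc]
    _ ≤ C * a ^ m * ((N : ℕ) : ℝ) ^ (⌈m⌉₊ : ℝ) :=
        mul_le_mul_of_nonneg_left (Real.rpow_le_rpow_of_exponent_le hN (Nat.le_ceil m))
          (by positivity)
    _ ≤ ⌈C * a ^ m⌉₊ * ((N : ℕ) : ℝ) ^ (⌈m⌉₊ : ℝ) :=
        mul_le_mul_of_nonneg_right (Nat.le_ceil _) (by positivity)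
    _ = ((⌈C * a ^ m⌉₊ * (N : ℕ) ^ ⌈m⌉₊ : ℕ) : ℝ) := by
        rw [Real.rpow_natCast]
        push_cast
        rfl

lemma exists_norm_evalL_le {q : ℕ+ → LaurentPolynomial ℂ} {D : ℕ+ → ℕ}
    (hD : PolyBounded D) (hq : ∀ N, CoeffBoundedBy (q N) (D N)) :
    ∃ K k : ℕ, ∀ N z, ‖z‖ = 1 → ‖evalL (q N) z‖ ≤ K * ((N : ℕ) : ℝ) ^ k := by
  obtain ⟨K, k, hK⟩ := ((const 2).mul hD |>.add (.const 1)).mul hD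
  exact ⟨K, k, fun N z hz => ((hq N).norm_evalL_le hz).trans (by exact_mod_cast hK N)⟩

end PolyBounded

lemma Moderate.exists_polyBounded_coeffBoundedBy_diag {ι : Type*} [Fintype ι]
    {P : (ι → ℕ+) → LaurentPolynomial ℂ} (hP : Moderate P) :
    ∃ D : ℕ+ → ℕ, PolyBounded D ∧ ∀ N : ℕ+, CoeffBoundedBy (P fun _ => N) (D N) := by
  obtain ⟨C, m, hC, -, hmod⟩ := hP
  refine ⟨fun N => ⌈C * (Fintype.card ι * (N : ℕ)) ^ m⌉₊,
    PolyBounded.ceil_mul_rpow hC.le (Nat.cast_nonneg _) m, fun N => ?_⟩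
  have hsum : ∑ _k : ι, ((N : ℕ) : ℝ) = Fintype.card ι * (N : ℕ) := by
    rw [Finset.sum_const, Finset.card_univ, nsmul_eq_mul]
  obtain ⟨hdeg, hcoeff⟩ := hmod fun _ => N
  simp only [hsum] at hdeg hcoeff
  refine ⟨fun j hj => ?_, fun j => (hcoeff j).le.trans (Nat.le_ceil _)⟩
  have := (hdeg j hj).le.trans (Nat.le_ceil _)
  exact_mod_cast this

lemma exists_polyBounded_coeffBoundedBy_of_eq_qint_pow_mul {s : ℕ}
    {p q : ℕ+ → LaurentPolynomial ℂ} {D : ℕ+ → ℕ} (hD : PolyBounded D)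
    (hp : ∀ N, CoeffBoundedBy (p N) (D N)) (hpq : ∀ N, p N = qint N ^ s * q N) :
    ∃ D' : ℕ+ → ℕ, PolyBounded D' ∧ ∀ N, CoeffBoundedBy (q N) (D' N) := by
  refine ⟨_, ?_, fun N => (hp N).of_eq_qint_pow_mul (hpq N)⟩
  have hshift : PolyBounded fun N => s * (2 * N - 2) :=
    ⟨2 * s, 1, fun N => by
      rw [pow_one, mul_comm 2 s, mul_assoc]
      exact Nat.mul_le_mul_left s (Nat.sub_le _ _)⟩
  refine .iterate (φ := fun D => (2 * D + 1) * D)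
    (fun f hf => ((PolyBounded.const 2).mul hf |>.add (.const 1)).mul hf) s (.add ?_ hshift)
  exact .iterate (φ := fun D => 2 * D + 4)
    (fun f hf => (PolyBounded.const 2).mul hf |>.add (.const 4)) s hD

lemma tendsto_div_mul_log_max_one_of_le_mul_pow (a : ℝ) {g : ℕ+ → ℝ} {K k : ℕ}
    (hg : ∀ N, g N ≤ K * ((N : ℕ) : ℝ) ^ k) :
    Tendsto (fun N : ℕ+ => (a / (N : ℕ)) * Real.log (max 1 (g N))) atTop (nhds 0) := by
  have hN : Tendsto (fun N : ℕ+ => ((N : ℕ) : ℝ)) atTop atTop :=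
    tendsto_natCast_atTop_atTop.comp tendsto_PNat_val_atTop_atTop
  have hmajorant : Tendsto (fun x : ℝ => Real.log (K + 1) / x + k * (Real.log x / x))
      atTop (nhds 0) := by
    simpa using (tendsto_const_nhds.div_atTop tendsto_id).add
      (Real.isLittleO_log_id_atTop.tendsto_div_nhds_zero.const_mul (k : ℝ))
  have hlog : Tendsto (fun N : ℕ+ => Real.log (max 1 (g N)) / (N : ℕ)) atTop (nhds 0) := by
    refine tendsto_of_tendsto_of_tendsto_of_le_of_le tendsto_const_nhds (hmajorant.comp hN)
      (fun N => div_nonneg (Real.log_nonneg (le_max_left _ _)) (Nat.cast_nonneg _)) fun N => ?_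
    have hN1 : (1 : ℝ) ≤ (N : ℕ) := by exact_mod_cast N.pos
    have hpow : (1 : ℝ) ≤ ((N : ℕ) : ℝ) ^ k := one_le_pow₀ hN1
    have hmax : max 1 (g N) ≤ (K + 1) * ((N : ℕ) : ℝ) ^ k :=
      max_le (by nlinarith [Nat.cast_nonneg (α := ℝ) K]) (by nlinarith [hg N])
    calc Real.log (max 1 (g N)) / (N : ℕ)
        ≤ Real.log ((K + 1) * ((N : ℕ) : ℝ) ^ k) / (N : ℕ) :=
          div_le_div_of_nonneg_right (Real.log_le_log (by positivity) hmax) (by positivity)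
      _ = Real.log (K + 1) / (N : ℕ) + k * (Real.log (N : ℕ) / (N : ℕ)) := by
          rw [Real.log_mul (by positivity) (by positivity), Real.log_pow]
          ring
  simpa [div_mul_eq_mul_div, mul_div_assoc] using hlog.const_mul a

theorem moderate_normalized_zero_growth_general
    (c : ℕ) (s : ℕ)
    (P : (Fin c → ℕ+) → LaurentPolynomial ℂ) (hP : Moderate P)
    (Q : ℕ+ → LaurentPolynomial ℂ)
    (hQ : ∀ N : ℕ+, P (fun _ => N) = qint N ^ s * Q N) :
    Filter.Tendsto
      (fun N : ℕ+ => (2 * Real.pi / ((N : ℕ) : ℝ)) *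
        Real.log (max 1
          ‖evalL (Q N) (Complex.exp (Real.pi * Complex.I / (2 * ((N : ℕ) : ℂ))))‖))
      Filter.atTop (nhds 0) := by
  obtain ⟨D, hD, hPD⟩ := hP.exists_polyBounded_coeffBoundedBy_diag
  obtain ⟨DQ, hDQ, hQD⟩ := exists_polyBounded_coeffBoundedBy_of_eq_qint_pow_mul hD hPD hQ
  obtain ⟨K, k, hK⟩ := hDQ.exists_norm_evalL_le hQD
  refine tendsto_div_mul_log_max_one_of_le_mul_pow _ fun N => hK N _ ?_
  simp [Complex.norm_exp, Complex.div_re]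

/-- Let `P` be a moderate multi-sequence indexed by `c`-tuples, and
suppose `[N]^s` divides `P_{(N,…,N)}` in `ℂ[A,A⁻¹]`, with quotient `Q_N`.  Then
`(2π/N)·log max(1, |Q_N(e^{iπ/2N})|) → 0` as `N → ∞`: the normalized values have zero
exponential growth rate. -/
theorem moderate_normalized_zero_growth
    (c : ℕ) (hc : 1 ≤ c) (s : ℕ)
    (P : (Fin c → ℕ+) → LaurentPolynomial ℂ) (hP : Moderate P)
    (Q : ℕ+ → LaurentPolynomial ℂ)
    (hQ : ∀ N : ℕ+, P (fun _ => N) = qint N ^ s * Q N) :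
    Filter.Tendsto
      (fun N : ℕ+ => (2 * Real.pi / ((N : ℕ) : ℝ)) *
        Real.log (max 1
          ‖evalL (Q N) (Complex.exp (Real.pi * Complex.I / (2 * ((N : ℕ) : ℂ))))‖))
      Filter.atTop (nhds 0) :=
  moderate_normalized_zero_growth_general c s P hP Q hQ
end
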